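/- arXiv:2007.03499 — 7 statements merged into one kernel-verified Lean document; each statement's English description precedes it below -/
import Mathlib

section
/- Let T > 0 and d > 0. There exists a constant C > 0 such that for every integer N ≥ 1 and every t > 0 one has (2π/(NT)) · ∑_{j ∈ J_N, j ≠ 0} exp(−2d ξ_j² t) ≤ C (1+t)^{−1/2}, where ξ_j = 2πj/(NT). -/
/-!
Write `a = 2π/(NT)` and `c = 2d a² t`, so that the quantity is `a · ∑_{j ∈ J_N, j ≠ 0} e^{-c j²}`.
The sum has at most `2N` terms, each at most `1`, which gives the bound `2Na = 4π/T`. Comparing it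
with the Gaussian integral gives the bound `a √(π/c) = √(π/(2d)) / √t`. A quantity `x ≥ 0` with
`x ≤ A` and `x √t ≤ B` satisfies `x² (1 + t) ≤ A² + B²`, which is the claimed decay.
-/

open Real Finset

/-- The index set `J_N = {j ∈ ℤ : -N/2 ≤ j < N/2}` of Bloch frequencies. -/
noncomputable def JN (N : ℕ) : Finset ℤ := Finset.Ico ⌈-(N : ℝ) / 2⌉ ⌈(N : ℝ) / 2⌉

lemma JN_subset_Icc (N : ℕ) : JN N ⊆ Icc (-(N : ℤ)) N := by
  intro j hj
  obtain ⟨hlo, hhi⟩ := mem_Ico.mp hj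
  have hN : (0 : ℝ) ≤ N := N.cast_nonneg
  have h₁ : -(N : ℤ) ≤ ⌈-(N : ℝ) / 2⌉ := Int.le_ceil_iff.mpr (by push_cast; linarith)
  have h₂ : ⌈(N : ℝ) / 2⌉ ≤ N := Int.ceil_le.mpr (by push_cast; linarith)
  exact mem_Icc.mpr ⟨by omega, by omega⟩

lemma sum_Icc_neg_erase_zero_of_even {M : Type*} [AddCommMonoid M] {f : ℤ → M}
    (hf : ∀ j, f (-j) = f j) (n : ℕ) :
    ∑ j ∈ (Icc (-(n : ℤ)) n).erase 0, f j = 2 • ∑ k ∈ range n, f (k + 1) := by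
  induction n with
  | zero => simp
  | succ n ih =>
    have hset : (Icc (-((n + 1 : ℕ) : ℤ)) (n + 1 : ℕ)).erase 0
        = insert ((n : ℤ) + 1) (insert (-((n : ℤ) + 1)) ((Icc (-(n : ℤ)) n).erase 0)) := by
      ext j; simp only [mem_erase, mem_Icc, mem_insert]; omega
    rw [hset, sum_insert (by simp; omega), sum_insert (by simp), ih, hf, sum_range_succ,
      smul_add, two_nsmul (f _)]
    abel

lemma sum_JN_erase_zero_le_of_even {f : ℤ → ℝ} (hf : ∀ j, f (-j) = f j) (hf₀ : ∀ j, 0 ≤ f j)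
    (N : ℕ) : ∑ j ∈ (JN N).erase 0, f j ≤ 2 * ∑ k ∈ range N, f (k + 1) := by
  rw [two_mul, ← two_nsmul, ← sum_Icc_neg_erase_zero_of_even hf]
  exact sum_le_sum_of_subset_of_nonneg (erase_subset_erase 0 (JN_subset_Icc N))
    fun j _ _ ↦ hf₀ j

lemma sum_range_exp_neg_mul_sq_le_card {c : ℝ} (hc : 0 ≤ c) (n : ℕ) :
    ∑ k ∈ range n, exp (-c * ((k : ℝ) + 1) ^ 2) ≤ n := by
  simpa using sum_le_card_nsmul (range n) _ 1 fun k _ ↦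
    exp_le_one_iff.mpr (by have := sq_nonneg ((k : ℝ) + 1); nlinarith)

lemma sum_range_exp_neg_mul_sq_le_sqrt {c : ℝ} (hc : 0 < c) (n : ℕ) :
    ∑ k ∈ range n, exp (-c * ((k : ℝ) + 1) ^ 2) ≤ √(π / c) / 2 := by
  have hanti : AntitoneOn (fun x : ℝ ↦ exp (-c * x ^ 2)) (Set.Icc 0 (0 + n)) :=
    fun x hx y _ hxy ↦ exp_le_exp.mpr <| by nlinarith [pow_le_pow_left₀ hx.1 hxy 2]
  calc ∑ k ∈ range n, exp (-c * ((k : ℝ) + 1) ^ 2)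
      = ∑ k ∈ range n, exp (-c * (0 + ((k + 1 : ℕ) : ℝ)) ^ 2) := by simp
    _ ≤ ∫ x in (0 : ℝ)..0 + n, exp (-c * x ^ 2) := hanti.sum_le_integral
    _ ≤ ∫ x in Set.Ioi 0, exp (-c * x ^ 2) := by
      rw [intervalIntegral.integral_of_le (by positivity)]
      exact MeasureTheory.setIntegral_mono_set (integrable_exp_neg_mul_sq hc).integrableOn
        (.of_forall fun _ ↦ (exp_pos _).le) Set.Ioc_subset_Ioi_self.eventuallyLE
    _ = √(π / c) / 2 := integral_gaussian_Ioi c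

lemma le_sqrt_sq_add_sq_mul_one_add_rpow_neg_half {x A B t : ℝ} (hx : 0 ≤ x) (ht : 0 ≤ t)
    (hA : x ≤ A) (hB : x * √t ≤ B) :
    x ≤ √(A ^ 2 + B ^ 2) * (1 + t) ^ (-(1 / 2) : ℝ) := by
  have h1t : 0 < 1 + t := by linarith
  rw [rpow_neg h1t.le, ← sqrt_eq_rpow, ← div_eq_mul_inv, le_div_iff₀ (sqrt_pos.mpr h1t)]
  rw [le_sqrt (by positivity) (by positivity), mul_pow, sq_sqrt h1t.le]
  have hxt : x ^ 2 * t ≤ B ^ 2 := by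
    simpa [mul_pow, sq_sqrt ht] using pow_le_pow_left₀ (by positivity) hB 2
  nlinarith [pow_le_pow_left₀ hx hA 2]

/-- Proposition 4.1(i): uniform-in-`N` diffusive decay of the Riemann sum
`(2π/(NT)) ∑_{j ∈ J_N, j ≠ 0} e^{-2d ξ_j² t}`, where `ξ_j = 2πj/(NT)`. -/
theorem uniform_sum_decay_half (T d : ℝ) (hT : 0 < T) (hd : 0 < d) :
    ∃ C : ℝ, 0 < C ∧ ∀ N : ℕ, 1 ≤ N → ∀ t : ℝ, 0 < t →
      2 * π / (N * T) *
          ∑ j ∈ (JN N).erase 0,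
            Real.exp (-2 * d * (2 * π * (j : ℝ) / (N * T)) ^ 2 * t)
        ≤ C * (1 + t) ^ (-(1 / 2) : ℝ) := by
  refine ⟨√((4 * π / T) ^ 2 + √(π / (2 * d)) ^ 2), by positivity, fun N hN t ht ↦ ?_⟩
  have hN₀ : (0 : ℝ) < N := by exact_mod_cast hN
  set a := 2 * π / (N * T) with ha
  have ha₀ : 0 < a := by positivity
  set c := 2 * d * a ^ 2 * t with hc
  have hc₀ : 0 < c := by positivity
  have hterm (j : ℤ) :
      exp (-2 * d * (2 * π * (j : ℝ) / (N * T)) ^ 2 * t) = exp (-c * (j : ℝ) ^ 2) := by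
    rw [hc, ha]; ring_nf
  rw [sum_congr rfl fun j _ ↦ hterm j]
  have hS := sum_JN_erase_zero_le_of_even (f := fun j : ℤ ↦ exp (-c * (j : ℝ) ^ 2))
    (by simp) (fun _ ↦ (exp_pos _).le) N
  push_cast at hS
  set S := ∑ j ∈ (JN N).erase 0, exp (-c * (j : ℝ) ^ 2)
  have hS_card : S ≤ 2 * N := by linarith [sum_range_exp_neg_mul_sq_le_card hc₀.le N]
  have hS_gauss : S ≤ √(π / c) := by linarith [sum_range_exp_neg_mul_sq_le_sqrt hc₀ N]
  have hsqrt : a * √(π / c) * √t = √(π / (2 * d)) := by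
    rw [← sqrt_sq ha₀.le, ← sqrt_mul', ← sqrt_mul', hc] <;> try positivity
    congr 1; field_simp
  apply le_sqrt_sq_add_sq_mul_one_add_rpow_neg_half (by positivity) ht.le
  · calc a * S ≤ a * (2 * N) := by gcongr
      _ = 4 * π / T := by rw [ha]; field_simp; ring
  · calc a * S * √t ≤ a * √(π / c) * √t := by gcongr
      _ = √(π / (2 * d)) := hsqrt
end

section
/- Let T > 0 and d > 0. There exists a constant C > 0 such that for every integer N ≥ 1 and every t > 0 one has (2π/(NT)) · ∑_{j ∈ J_N} ξ_j² exp(−2d ξ_j² t) ≤ C (1+t)^{−3/2}, where ξ_j = 2πj/(NT). -/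
open Real Finset

theorem sq_mul_exp_neg_sq_le_sq (x : ℝ) : x ^ 2 * exp (-x ^ 2) ≤ x ^ 2 :=
  mul_le_of_le_one_right (sq_nonneg x) (exp_le_one_iff.2 (neg_nonpos.2 (sq_nonneg x)))

theorem sq_mul_exp_neg_sq_le_two_div_sq {x : ℝ} (hx : x ≠ 0) :
    x ^ 2 * exp (-x ^ 2) ≤ 2 / x ^ 2 := by
  have hx2 : 0 < x ^ 2 := by positivity
  have hexp : (x ^ 2) ^ 2 / 2 ≤ exp (x ^ 2) := by
    simpa using pow_div_factorial_le_exp _ hx2.le 2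
  rw [exp_neg, ← div_eq_mul_inv, div_le_div_iff₀ (exp_pos _) hx2]
  nlinarith

theorem sum_filter_lt_inv_sq_le (s : Finset ℕ) (M : ℕ) :
    ∑ k ∈ s with M < k, ((k : ℝ) ^ 2)⁻¹ ≤ 2 / (M + 1) := by
  refine le_trans (sum_le_sum_of_subset_of_nonneg (fun k hk => ?_) fun _ _ _ => by positivity)
    (sum_Ioo_inv_sq_le M (s.sup id + 1))
  rw [mem_filter] at hk
  exact mem_Ioo.2 ⟨hk.2, Nat.lt_succ_of_le (le_sup (f := id) hk.1)⟩

theorem riemannSum_nat_sq_mul_exp_neg_sq_le {u : ℝ} (hu : 0 < u) (s : Finset ℕ) :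
    u * ∑ k ∈ s, (u * k) ^ 2 * exp (-(u * k) ^ 2) ≤ 6 := by
  set M := ⌊u⁻¹⌋₊
  have huM : u * M ≤ 1 := by
    have := mul_le_mul_of_nonneg_left (Nat.floor_le (inv_nonneg.2 hu.le)) hu.le
    rwa [mul_inv_cancel₀ hu.ne'] at this
  have huM1 : 1 < u * (M + 1) := by
    have := Nat.lt_floor_add_one u⁻¹; rwa [inv_lt_iff_one_lt_mul₀' hu] at this
  have near : u * ∑ k ∈ s with k ≤ M, (u * k) ^ 2 * exp (-(u * k) ^ 2) ≤ 2 := by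
    have hcube : ((M : ℝ) + 1) * M ^ 2 ≤ 2 * M ^ 3 := by
      rcases M.eq_zero_or_pos with hM0 | hM0
      · simp [hM0]
      · have : (1 : ℝ) ≤ M := by exact_mod_cast hM0
        nlinarith
    calc u * ∑ k ∈ s with k ≤ M, (u * k) ^ 2 * exp (-(u * k) ^ 2)
        ≤ u * ∑ _k ∈ range (M + 1), (u * M) ^ 2 := by
          gcongr
          refine sum_le_sum_of_subset_of_nonneg (fun k hk => ?_) (fun _ _ _ => by positivity)
            |>.trans (sum_le_sum fun k hk => ?_)
          · exact mem_range.2 (Nat.lt_succ_of_le (mem_filter.1 hk).2)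
          · have hk : (k : ℝ) ≤ M := by exact_mod_cast Nat.lt_succ_iff.1 (mem_range.1 hk)
            exact (sq_mul_exp_neg_sq_le_sq _).trans (by gcongr)
      _ = u ^ 3 * ((M + 1) * M ^ 2) := by rw [sum_const, card_range, nsmul_eq_mul]; push_cast; ring
      _ ≤ 2 * (u * M) ^ 3 := by nlinarith [pow_pos hu 3]
      _ ≤ 2 := by nlinarith [pow_le_one₀ (by positivity) huM (n := 3)]
  have far : u * ∑ k ∈ s with M < k, (u * k) ^ 2 * exp (-(u * k) ^ 2) ≤ 4 := by
    calc u * ∑ k ∈ s with M < k, (u * k) ^ 2 * exp (-(u * k) ^ 2)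
        ≤ u * ∑ k ∈ s with M < k, 2 / u ^ 2 * ((k : ℝ) ^ 2)⁻¹ := by
          refine mul_le_mul_of_nonneg_left (sum_le_sum fun k hk => ?_) hu.le
          have hk0 : (k : ℝ) ≠ 0 := Nat.cast_ne_zero.2 (Nat.zero_lt_of_lt (mem_filter.1 hk).2).ne'
          refine (sq_mul_exp_neg_sq_le_two_div_sq (by positivity)).trans_eq ?_
          rw [mul_pow, div_mul_eq_div_mul_one_div, one_div]
      _ = 2 / u * ∑ k ∈ s with M < k, ((k : ℝ) ^ 2)⁻¹ := by rw [← mul_sum]; field_simp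
      _ ≤ 2 / u * (2 / (M + 1)) := by gcongr; exact sum_filter_lt_inv_sq_le s M
      _ ≤ 4 := by
          rw [div_mul_div_comm, div_le_iff₀ (by positivity)]; linarith
  rw [← sum_filter_add_sum_filter_not s (· ≤ M), mul_add]
  simp only [not_le]
  linarith

theorem sum_natAbs_le_two_mul_sum_image (s : Finset ℤ) {f : ℕ → ℝ} (hf : ∀ k, 0 ≤ f k) :
    ∑ j ∈ s, f j.natAbs ≤ 2 * ∑ k ∈ s.image Int.natAbs, f k := by
  rw [sum_comp, mul_sum]
  refine sum_le_sum fun k _ => ?_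
  have hfiber : #{j ∈ s | j.natAbs = k} ≤ 2 := by
    refine (card_le_card fun j hj => ?_).trans (card_le_two (a := (k : ℤ)) (b := -k))
    rw [mem_filter] at hj
    simp only [mem_insert, mem_singleton]
    omega
  rw [nsmul_eq_mul]
  exact mul_le_mul_of_nonneg_right (by exact_mod_cast hfiber) (hf k)

theorem riemannSum_int_sq_mul_exp_neg_sq_le {u : ℝ} (hu : 0 < u) (s : Finset ℤ) :
    u * ∑ j ∈ s, (u * j) ^ 2 * exp (-(u * j) ^ 2) ≤ 12 := by
  set g : ℕ → ℝ := fun k => (u * k) ^ 2 * exp (-(u * k) ^ 2)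
  have hg : ∀ j : ℤ, (u * j) ^ 2 * exp (-(u * j) ^ 2) = g j.natAbs := by
    intro j
    simp only [g, Nat.cast_natAbs, Int.cast_abs, mul_pow, sq_abs]
  calc u * ∑ j ∈ s, (u * j) ^ 2 * exp (-(u * j) ^ 2)
      ≤ u * (2 * ∑ k ∈ s.image Int.natAbs, g k) := by
        simp only [hg]
        gcongr
        exact sum_natAbs_le_two_mul_sum_image s fun k => by positivity
    _ = 2 * (u * ∑ k ∈ s.image Int.natAbs, g k) := by ring
    _ ≤ 2 * 6 := by gcongr; exact riemannSum_nat_sq_mul_exp_neg_sq_le hu _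
    _ = 12 := by norm_num

theorem riemannSum_sq_mul_exp_neg_mul_sq_le_rpow {h a : ℝ} (hh : 0 < h) (ha : 0 < a)
    (s : Finset ℤ) :
    h * ∑ j ∈ s, (h * j) ^ 2 * exp (-a * (h * j) ^ 2) ≤ 12 * a ^ (-(3 / 2) : ℝ) := by
  have hscale : a ^ (-(3 / 2) : ℝ) * (a * √a) = 1 := by
    rw [sqrt_eq_rpow, ← rpow_one_add' ha.le (by norm_num), ← rpow_add ha]; norm_num
  calc h * ∑ j ∈ s, (h * j) ^ 2 * exp (-a * (h * j) ^ 2)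
      = a ^ (-(3 / 2) : ℝ) * ((h * √a) * ∑ j ∈ s, (h * √a * j) ^ 2 * exp (-(h * √a * j) ^ 2)) := by
        have hterm : ∀ j : ℤ, (h * √a * j) ^ 2 = a * (h * j) ^ 2 := by
          intro j; rw [mul_right_comm, mul_pow _ √a, sq_sqrt ha.le]; ring
        simp only [hterm, neg_mul, mul_sum]
        refine sum_congr rfl fun j _ => ?_
        linear_combination (h * (h * j) ^ 2 * exp (-(a * (h * j) ^ 2))) * hscale.symm
    _ ≤ a ^ (-(3 / 2) : ℝ) * 12 := by
        gcongr; exact riemannSum_int_sq_mul_exp_neg_sq_le (by positivity) s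
    _ = 12 * a ^ (-(3 / 2) : ℝ) := mul_comm _ _

theorem abs_le_of_mem_JN {N : ℕ} {j : ℤ} (hj : j ∈ JN N) : |(j : ℝ)| ≤ N / 2 := by
  rw [JN, mem_Ico, Int.ceil_le, Int.lt_ceil] at hj
  exact abs_le.2 ⟨by linarith [hj.1], hj.2.le⟩

theorem card_JN_le (N : ℕ) : #(JN N) ≤ N := by
  have hlt : ((⌈(N : ℝ) / 2⌉ - ⌈-(N : ℝ) / 2⌉ : ℤ) : ℝ) < N + 1 := by
    push_cast
    linarith [Int.ceil_lt_add_one ((N : ℝ) / 2), Int.le_ceil (-(N : ℝ) / 2)]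
  rw [JN, Int.card_Ico]
  have : ⌈(N : ℝ) / 2⌉ - ⌈-(N : ℝ) / 2⌉ < N + 1 := by exact_mod_cast hlt
  omega

theorem sum_sq_mul_exp_neg_mul_sq_le_card_mul {s : Finset ℤ} {R : ℝ}
    (hs : ∀ j ∈ s, |(j : ℝ)| ≤ R) (h : ℝ) {a : ℝ} (ha : 0 ≤ a) :
    ∑ j ∈ s, (h * j) ^ 2 * exp (-a * (h * j) ^ 2) ≤ #s * (h * R) ^ 2 := by
  rw [← nsmul_eq_mul]
  refine sum_le_card_nsmul _ _ _ fun j hj => ?_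
  have hexp : exp (-a * (h * j) ^ 2) ≤ 1 := exp_le_one_iff.2 (by nlinarith [sq_nonneg (h * j)])
  calc (h * j) ^ 2 * exp (-a * (h * j) ^ 2)
      ≤ (h * j) ^ 2 := mul_le_of_le_one_right (sq_nonneg _) hexp
    _ ≤ (h * R) ^ 2 := by
        rw [mul_pow, mul_pow, ← sq_abs (j : ℝ)]
        gcongr
        exact hs j hj

theorem le_two_rpow_mul_add_mul_one_add_rpow_neg {x F K t p : ℝ} (ht : 0 < t) (hp : 0 ≤ p)
    (hF : 0 ≤ F) (hK : 0 ≤ K) (hxF : x ≤ F) (hxK : x ≤ K * t ^ (-p)) :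
    x ≤ 2 ^ p * (F + K) * (1 + t) ^ (-p) := by
  rcases le_total t 1 with ht1 | ht1
  · have h2 : 1 ≤ 2 ^ p * (1 + t) ^ (-p) := by
      rw [rpow_neg (by linarith), ← div_eq_mul_inv, one_le_div (by positivity)]
      exact rpow_le_rpow (by linarith) (by linarith) hp
    nlinarith
  · have h2 : t ^ (-p) ≤ 2 ^ p * (1 + t) ^ (-p) := by
      rw [rpow_neg ht.le, rpow_neg (by linarith), ← div_eq_mul_inv, le_div_iff₀ (by positivity),
        inv_mul_eq_div, div_le_iff₀ (by positivity), ← mul_rpow zero_le_two ht.le]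
      exact rpow_le_rpow (by linarith) (by linarith) hp
    nlinarith [rpow_nonneg ht.le (-p)]

/-- Proposition 4.1(ii): uniform-in-`N` diffusive decay of the weighted Riemann sum
`(2π/(NT)) ∑_{j ∈ J_N} ξ_j² e^{-2d ξ_j² t}`, where `ξ_j = 2πj/(NT)`. -/
theorem uniform_sum_decay_threehalves (T d : ℝ) (hT : 0 < T) (hd : 0 < d) :
    ∃ C : ℝ, 0 < C ∧ ∀ N : ℕ, 1 ≤ N → ∀ t : ℝ, 0 < t →
      2 * π / (N * T) *
          ∑ j ∈ JN N,
            (2 * π * (j : ℝ) / (N * T)) ^ 2 *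
              Real.exp (-2 * d * (2 * π * (j : ℝ) / (N * T)) ^ 2 * t)
        ≤ C * (1 + t) ^ (-(3 / 2) : ℝ) := by
  refine ⟨2 ^ (3 / 2 : ℝ) * (2 * π ^ 3 / T ^ 3 + 12 * (2 * d) ^ (-(3 / 2) : ℝ)), by positivity,
    fun N hN t ht => ?_⟩
  set h := 2 * π / (N * T)
  have hh : 0 < h := by positivity
  have hξ : ∀ j : ℤ, 2 * π * (j : ℝ) / (N * T) = h * j := fun j => by ring
  have hrate : ∀ x : ℝ, -2 * d * x * t = -(2 * d * t) * x := fun x => by ring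
  simp only [hξ, hrate]
  refine le_two_rpow_mul_add_mul_one_add_rpow_neg ht (by norm_num) (by positivity) (by positivity)
    ?_ ?_
  · calc h * ∑ j ∈ JN N, (h * j) ^ 2 * exp (-(2 * d * t) * (h * j) ^ 2)
        ≤ h * (N * (h * (N / 2)) ^ 2) := by
          gcongr
          refine (sum_sq_mul_exp_neg_mul_sq_le_card_mul (fun j => abs_le_of_mem_JN) h
            (by positivity)).trans ?_
          gcongr
          exact_mod_cast card_JN_le N
      _ = 2 * π ^ 3 / T ^ 3 := by simp only [h]; field_simp
  · calc h * ∑ j ∈ JN N, (h * j) ^ 2 * exp (-(2 * d * t) * (h * j) ^ 2)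
        ≤ 12 * (2 * d * t) ^ (-(3 / 2) : ℝ) :=
          riemannSum_sq_mul_exp_neg_mul_sq_le_rpow hh (by positivity) _
      _ = 12 * (2 * d) ^ (-(3 / 2) : ℝ) * t ^ (-(3 / 2) : ℝ) := by
          rw [mul_rpow (by positivity) ht.le, mul_assoc]
end

section
/- Let T > 0 and d > 0. There exists a constant C > 0 such that for every integer N ≥ 1 and every t > 0 one has | (2π/(NT)) · ∑_{j ∈ J_N, j ≠ 0} exp(−2d ξ_j² t) − ∫_{−π/T}^{π/T} exp(−2d ξ² t) dξ | ≤ C / N, where ξ_j = 2πj/(NT). -/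
open Real Finset

/-!
Substituting `ξ = h x` with `h = 2π/(NT)` turns both terms into `h` times the sum over
`j ∈ J_N \ {0}` and the integral over `[-N/2, N/2]` of the Gaussian `g x = exp (-a x²)`,
`a = 2 d t h²`. Since `g` is even and decreasing on `[0, ∞)`, the integral test compares the sum
over each half of `J_N \ {0}` with `∫₀^{N/2} g` up to `g 0 = 1`, whatever `a` is. Hence the error
is at most `2h = 4π/(NT)`.
-/

open MeasureTheory

lemma Int.sum_Ioc_zero_natCast {M : Type*} [AddCommMonoid M] (F : ℤ → M) (n : ℕ) :
    ∑ j ∈ Ioc (0 : ℤ) n, F j = ∑ i ∈ Finset.range n, F (i + 1) := by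
  rw [Int.Ioc_eq_finset_map, sum_map]
  simp [add_comm]

lemma Int.sum_Ico_neg_natCast_zero {M : Type*} [AddCommMonoid M] (F : ℤ → M) (m : ℕ) :
    ∑ j ∈ Ico (-(m : ℤ)) 0, F j = ∑ j ∈ Ioc (0 : ℤ) m, F (-j) :=
  sum_nbij' (fun j ↦ -j) (fun j ↦ -j) (by intro j; simp only [mem_Ico, mem_Ioc]; omega)
    (by intro j; simp only [mem_Ico, mem_Ioc]; omega) (by simp) (by simp) (by simp)

lemma Int.sum_Ico_erase_zero_of_even {M : Type*} [AddCommMonoid M] {F : ℤ → M}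
    (hF : ∀ j, F (-j) = F j) (m n : ℕ) :
    ∑ j ∈ (Ico (-(m : ℤ)) (n + 1)).erase 0, F j =
      ∑ i ∈ Finset.range m, F (i + 1) + ∑ i ∈ Finset.range n, F (i + 1) := by
  have hsplit : (Ico (-(m : ℤ)) (n + 1)).erase 0 = Ico (-(m : ℤ)) 0 ∪ Ioc 0 n := by
    ext j; simp only [mem_erase, mem_Ico, mem_union, mem_Ioc]; omega
  have hdisj : Disjoint (Ico (-(m : ℤ)) 0) (Ioc 0 n) :=
    disjoint_left.2 fun j h₁ h₂ ↦ by simp only [mem_Ico, mem_Ioc] at h₁ h₂; omega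
  rw [hsplit, sum_union hdisj, Int.sum_Ico_neg_natCast_zero, Int.sum_Ioc_zero_natCast,
    Int.sum_Ioc_zero_natCast]
  simp only [hF]

lemma AntitoneOn.abs_sum_range_sub_integral_le {f : ℝ → ℝ} (hf : AntitoneOn f (Set.Ici 0))
    (hf₀ : ∀ x, 0 ≤ x → 0 ≤ f x) {m : ℕ} {B : ℝ} (hmB : m ≤ B) (hBm : B ≤ m + 1) :
    |∑ i ∈ range m, f (i + 1) - ∫ x in 0..B, f x| ≤ f 0 := by
  have hint : ∀ b, 0 ≤ b → IntervalIntegrable f volume 0 b := fun b hb ↦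
    (hf.mono fun x hx ↦ le_trans (le_min le_rfl hb) hx.1).intervalIntegrable
  have hnonneg : ∀ b, 0 ≤ᵐ[volume.restrict (Set.Ioc 0 b)] f := fun b ↦
    ae_restrict_of_forall_mem measurableSet_Ioc fun x hx ↦ hf₀ x hx.1.le
  have hsum_le : ∑ i ∈ range m, f (i + 1) ≤ ∫ x in 0..(m : ℝ), f x := by
    simpa using (hf.mono Set.Icc_subset_Ici_self).sum_le_integral (x₀ := 0) (a := m)
  have hint_le : ∫ x in 0..(m : ℝ) + 1, f x ≤ f 0 + ∑ i ∈ range m, f (i + 1) := by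
    simpa [sum_range_succ', add_comm] using
      (hf.mono Set.Icc_subset_Ici_self).integral_le_sum (x₀ := 0) (a := m + 1)
  have hm_le : ∫ x in 0..(m : ℝ), f x ≤ ∫ x in 0..B, f x :=
    intervalIntegral.integral_mono_interval le_rfl m.cast_nonneg hmB (hnonneg B)
      (hint B (m.cast_nonneg.trans hmB))
  have hle_m : ∫ x in 0..B, f x ≤ ∫ x in 0..(m : ℝ) + 1, f x :=
    intervalIntegral.integral_mono_interval le_rfl (m.cast_nonneg.trans hmB) hBm (hnonneg _)
      (hint _ (by positivity))
  rw [abs_le]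
  constructor <;> linarith [hf₀ 0 le_rfl]

lemma intervalIntegral.integral_neg_self_of_even {f : ℝ → ℝ} (heven : ∀ x, f (-x) = f x)
    {B : ℝ} (hf : IntervalIntegrable f volume 0 B) :
    ∫ x in -B..B, f x = 2 * ∫ x in 0..B, f x := by
  have hf_neg : (fun x ↦ f (-x)) = f := funext heven
  have hleft : IntervalIntegrable f volume (-B) 0 := by
    have := (IntervalIntegrable.iff_comp_neg (f := f)).1 hf
    rw [hf_neg, neg_zero] at this
    exact this.symm
  have hreflect : ∫ x in -B..0, f x = ∫ x in 0..B, f x := by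
    simpa [hf_neg] using (intervalIntegral.integral_comp_neg (a := 0) (b := B) (f := f)).symm
  rw [← integral_add_adjacent_intervals hleft hf, hreflect, two_mul]

lemma antitoneOn_exp_neg_mul_sq {a : ℝ} (ha : 0 ≤ a) :
    AntitoneOn (fun x ↦ exp (-a * x ^ 2)) (Set.Ici 0) := by
  intro x hx y _ hxy
  simp only [exp_le_exp, neg_mul, neg_le_neg_iff]
  gcongr

lemma abs_sum_exp_neg_mul_sq_sub_integral_le {a : ℝ} (ha : 0 ≤ a) {m n : ℕ} {B : ℝ}
    (hmB : m ≤ B) (hBm : B ≤ m + 1) (hnB : n ≤ B) (hBn : B ≤ n + 1) :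
    |∑ j ∈ (Ico (-(m : ℤ)) (n + 1)).erase 0, exp (-a * (j : ℝ) ^ 2) -
        ∫ x in -B..B, exp (-a * x ^ 2)| ≤ 2 := by
  set g : ℝ → ℝ := fun x ↦ exp (-a * x ^ 2)
  have hg_anti := antitoneOn_exp_neg_mul_sq ha
  have hg₀ : ∀ x, 0 ≤ x → 0 ≤ g x := fun x _ ↦ (exp_pos _).le
  have hsum := Int.sum_Ico_erase_zero_of_even (F := fun j : ℤ ↦ g j) (by simp [g]) m n
  have hint := intervalIntegral.integral_neg_self_of_even (f := g) (B := B) (by simp [g])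
    ((by fun_prop : Continuous g).intervalIntegrable _ _)
  push_cast at hsum
  rw [hsum, hint]
  calc _ = |(∑ i ∈ range m, g (i + 1) - ∫ x in 0..B, g x) +
        (∑ i ∈ range n, g (i + 1) - ∫ x in 0..B, g x)| := by ring_nf
    _ ≤ g 0 + g 0 := (abs_add_le _ _).trans <| add_le_add
        (hg_anti.abs_sum_range_sub_integral_le hg₀ hmB hBm)
        (hg_anti.abs_sum_range_sub_integral_le hg₀ hnB hBn)
    _ = 2 := by norm_num [g]

lemma JN_eq_Ico (N : ℕ) : JN N = Ico (-((N / 2 : ℕ) : ℤ)) ((N + 1) / 2 : ℕ) := by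
  have h₁ : 2 * ((N / 2 : ℕ) : ℝ) ≤ N := by norm_cast; omega
  have h₂ : (N : ℝ) ≤ 2 * ((N / 2 : ℕ) : ℝ) + 1 := by norm_cast; omega
  have h₃ : 2 * (((N + 1) / 2 : ℕ) : ℝ) ≤ N + 1 := by norm_cast; omega
  have h₄ : (N : ℝ) ≤ 2 * (((N + 1) / 2 : ℕ) : ℝ) := by norm_cast; omega
  unfold JN
  congr 1 <;> rw [Int.ceil_eq_iff] <;> simp only [Int.cast_neg, Int.cast_natCast] <;>
    constructor <;> linarith

lemma natCast_le_div_two_le_natCast_add_one {N k : ℕ} (h₁ : 2 * k ≤ N) (h₂ : N ≤ 2 * k + 2) :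
    (k : ℝ) ≤ N / 2 ∧ (N : ℝ) / 2 ≤ k + 1 := by
  have h₁' : 2 * (k : ℝ) ≤ N := by exact_mod_cast h₁
  have h₂' : (N : ℝ) ≤ 2 * k + 2 := by exact_mod_cast h₂
  constructor <;> linarith

/-- First estimate of Proposition 5.1: the Riemann sum
`(2π/(NT)) ∑_{j ∈ J_N, j ≠ 0} e^{-2d ξ_j² t}` approximates the Gaussian integral
`∫_{-π/T}^{π/T} e^{-2dξ²t} dξ` with error at most `C/N`, uniformly in `t > 0`. -/
theorem sharp_sum_integral_comparison (T d : ℝ) (hT : 0 < T) (hd : 0 < d) :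
    ∃ C : ℝ, 0 < C ∧ ∀ N : ℕ, 1 ≤ N → ∀ t : ℝ, 0 < t →
      |2 * π / (N * T) *
            ∑ j ∈ (JN N).erase 0,
              Real.exp (-2 * d * (2 * π * (j : ℝ) / (N * T)) ^ 2 * t) -
          ∫ ξ in (-(π / T))..(π / T), Real.exp (-2 * d * ξ ^ 2 * t)|
        ≤ C / N := by
  refine ⟨4 * π / T, by positivity, fun N hN t ht ↦ ?_⟩
  have hN₀ : (0 : ℝ) < N := by exact_mod_cast hN
  set h := 2 * π / (N * T) with h_def
  have hh : 0 < h := by positivity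
  set a := 2 * d * t * h ^ 2
  have hJ : JN N = Ico (-((N / 2 : ℕ) : ℤ)) (((N - 1) / 2 : ℕ) + 1) := by
    rw [JN_eq_Ico, show (N + 1) / 2 = (N - 1) / 2 + 1 by omega, Nat.cast_succ]
  have hsummand : ∀ j : ℤ,
      exp (-2 * d * (2 * π * (j : ℝ) / (N * T)) ^ 2 * t) = exp (-a * (j : ℝ) ^ 2) := by
    intro j; congr 1; ring
  have hint : ∫ ξ in -(π / T)..π / T, exp (-2 * d * ξ ^ 2 * t) =
      h * ∫ x in -((N : ℝ) / 2)..N / 2, exp (-a * x ^ 2) := by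
    have hhN : h * (N / 2) = π / T := by rw [h_def]; field_simp
    rw [← hhN, ← mul_neg, ← intervalIntegral.smul_integral_comp_mul_left, smul_eq_mul]
    exact congrArg (h * ·) <| intervalIntegral.integral_congr fun x _ ↦ by congr 1; ring
  obtain ⟨hm₁, hm₂⟩ :=
    natCast_le_div_two_le_natCast_add_one (N := N) (k := N / 2) (by omega) (by omega)
  obtain ⟨hn₁, hn₂⟩ :=
    natCast_le_div_two_le_natCast_add_one (N := N) (k := (N - 1) / 2) (by omega) (by omega)
  rw [hJ, sum_congr rfl fun j _ ↦ hsummand j, hint, ← mul_sub, abs_mul, abs_of_pos hh]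
  calc h * _ ≤ h * 2 := by
        gcongr
        exact abs_sum_exp_neg_mul_sq_sub_integral_le (by positivity) hm₁ hm₂ hn₁ hn₂
    _ = 4 * π / T / N := by rw [h_def]; field_simp; ring
end

section
/- Let T > 0 and d > 0. For every integer N ≥ 2 and every t ≥ 1 one has the explicit bound | (2π√t/(NT)) · ∑_{j ∈ J_N, j ≠ 0} exp(−2d ξ_j² t) − ∫_{−π√t/T}^{π√t/T} exp(−2d z²) dz | ≤ 4π√t/(NT), where ξ_j = 2πj/(NT) (so that exp(−2d ξ_j² t) = exp(−2d z_j²) with z_j = ξ_j √t). -/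
/-!
The Gaussian `f z = exp (-2 d z²)` is even, nonnegative and decreasing on `[0, ∞)`, with
`f 0 = 1`. Writing `h = 2π√t/(NT)`, the summand at `j` is `f (h j)`, so by evenness the
negative and the positive part of `J_N \ {0}` each give a right-endpoint Riemann sum
`h ∑_{k < M} f (h (k + 1))` with `h M ≤ hN/2 = π√t/T ≤ h (M + 1)`. For a decreasing
nonnegative function such a sum lies between `∫_0^{hN/2} f - h f 0` and `∫_0^{hN/2} f`,
and the integral over the symmetric interval is twice the integral over `[0, hN/2]`.
-/

open Real Finset

open MeasureTheory intervalIntegral Set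

lemma mem_JN {N : ℕ} {j : ℤ} : j ∈ JN N ↔ -(N : ℤ) ≤ 2 * j ∧ 2 * j < N := by
  rw [JN, Finset.mem_Ico, Int.ceil_le, Int.lt_ceil, div_le_iff₀ two_pos, lt_div_iff₀ two_pos]
  norm_cast
  omega

lemma sum_JN_erase_zero {M : Type*} [AddCommMonoid M] (N : ℕ) (g : ℤ → M) :
    ∑ j ∈ (JN N).erase 0, g j =
      ∑ k ∈ range (N / 2), g (-((k : ℤ) + 1)) +
        ∑ k ∈ range ((N - 1) / 2), g ((k : ℤ) + 1) := by
  set Jneg := (range (N / 2)).image (fun k : ℕ => -((k : ℤ) + 1))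
  set Jpos := (range ((N - 1) / 2)).image (fun k : ℕ => (k : ℤ) + 1)
  have hsplit : (JN N).erase 0 = Jneg ∪ Jpos := by
    ext j
    simp only [Jneg, Jpos, mem_erase, mem_JN, Finset.mem_union, Finset.mem_image, Finset.mem_range]
    constructor
    · rintro ⟨hj, hlo, hhi⟩
      rcases lt_or_gt_of_ne hj with hneg | hpos
      · exact Or.inl ⟨(-j - 1).toNat, by omega, by omega⟩
      · exact Or.inr ⟨(j - 1).toNat, by omega, by omega⟩
    · rintro (⟨k, hk, rfl⟩ | ⟨k, hk, rfl⟩) <;> omega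
  have hdisj : Disjoint Jneg Jpos := by
    simp only [Jneg, Jpos, Finset.disjoint_left, Finset.mem_image]
    rintro _ ⟨k, -, rfl⟩ ⟨l, -, hl⟩
    omega
  rw [hsplit, sum_union hdisj, sum_image (fun _ _ _ _ h => by omega),
    sum_image (fun _ _ _ _ h => by omega)]

lemma Function.Even.intervalIntegral_neg_eq_two_mul {f : ℝ → ℝ} (heven : Function.Even f)
    {a : ℝ} (hfi : IntervalIntegrable f volume 0 a) :
    ∫ x in -a..a, f x = 2 * ∫ x in 0..a, f x := by
  have hneg : ∫ x in -a..0, f x = ∫ x in 0..a, f x := by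
    simpa [heven _] using (integral_comp_neg (a := 0) (b := a) f).symm
  have hfi' : IntervalIntegrable f volume (-a) 0 := by
    simpa [heven _] using (hfi.comp_sub_left 0).symm
  rw [← integral_add_adjacent_intervals hfi' hfi, hneg, two_mul]

section Riemann

variable {f : ℝ → ℝ} {h : ℝ}

lemma AntitoneOn.comp_mul_left_Icc (hh : 0 ≤ h) {b : ℝ} (hf : AntitoneOn f (Icc 0 (h * b))) :
    AntitoneOn (fun x => f (h * x)) (Icc 0 b) :=
  hf.comp_MonotoneOn ((monotone_id.const_mul hh).monotoneOn _)
    fun _ hx => ⟨mul_nonneg hh hx.1, mul_le_mul_of_nonneg_left hx.2 hh⟩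

lemma AntitoneOn.mul_sum_le_integral (hh : 0 < h) {M : ℕ}
    (hf : AntitoneOn f (Icc 0 (h * M))) :
    h * ∑ k ∈ range M, f (h * (k + 1)) ≤ ∫ x in 0..h * M, f x := by
  have hsum := AntitoneOn.sum_le_integral (x₀ := 0) (a := M)
    (by simpa using hf.comp_mul_left_Icc hh.le)
  simp only [zero_add, Nat.cast_add, Nat.cast_one] at hsum
  calc h * ∑ k ∈ range M, f (h * (k + 1)) ≤ h * ∫ x in 0..M, f (h * x) := by gcongr
    _ = ∫ x in 0..h * M, f x := by simp

lemma AntitoneOn.integral_le_mul_sum (hh : 0 < h) {M : ℕ}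
    (hf : AntitoneOn f (Icc 0 (h * M))) :
    ∫ x in 0..h * M, f x ≤ h * ∑ k ∈ range M, f (h * k) := by
  have hsum := AntitoneOn.integral_le_sum (x₀ := 0) (a := M)
    (by simpa using hf.comp_mul_left_Icc hh.le)
  simp only [zero_add] at hsum
  calc ∫ x in 0..h * M, f x = h * ∫ x in 0..M, f (h * x) := by simp
    _ ≤ h * ∑ k ∈ range M, f (h * k) := by gcongr

lemma abs_mul_sum_sub_integral_le (hf : AntitoneOn f (Ici 0))
    (hf_nonneg : ∀ x, 0 ≤ x → 0 ≤ f x) (hh : 0 < h) {M : ℕ} {a : ℝ}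
    (hMa : h * M ≤ a) (haM : a ≤ h * (M + 1)) :
    |h * ∑ k ∈ range M, f (h * (k + 1)) - ∫ x in 0..a, f x| ≤ h * f 0 := by
  have ha : 0 ≤ a := (by positivity : (0 : ℝ) ≤ h * M).trans hMa
  have hint_mono (b c : ℝ) (hb : 0 ≤ b) (hbc : b ≤ c) :
      ∫ x in 0..b, f x ≤ ∫ x in 0..c, f x :=
    integral_mono_interval le_rfl hb hbc
      ((ae_restrict_iff' measurableSet_Ioc).2 (.of_forall fun x hx => hf_nonneg x hx.1.le))
      (hf.mono (by simp [Set.uIcc_of_le (hb.trans hbc), Set.Icc_subset_Ici_self])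
        ).intervalIntegrable
  have hlow : h * ∑ k ∈ range M, f (h * (k + 1)) ≤ ∫ x in 0..a, f x :=
    ((hf.mono Set.Icc_subset_Ici_self).mul_sum_le_integral hh).trans
      (hint_mono _ _ (by positivity) hMa)
  have hup : ∫ x in 0..a, f x ≤ h * f 0 + h * ∑ k ∈ range M, f (h * (k + 1)) := calc
    ∫ x in 0..a, f x ≤ ∫ x in 0..h * (M + 1 : ℕ), f x := by
      push_cast; exact hint_mono _ _ ha haM
    _ ≤ h * ∑ k ∈ range (M + 1), f (h * k) :=
      (hf.mono Set.Icc_subset_Ici_self).integral_le_mul_sum hh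
    _ = h * f 0 + h * ∑ k ∈ range M, f (h * (k + 1)) := by
      rw [sum_range_succ', mul_add, add_comm]; push_cast; simp
  rw [abs_le]
  constructor <;> linarith

lemma abs_mul_sum_JN_sub_integral_le (heven : Function.Even f) (hf : AntitoneOn f (Ici 0))
    (hf_nonneg : ∀ x, 0 ≤ x → 0 ≤ f x) (hh : 0 < h) {N : ℕ} (hN : 1 ≤ N) :
    |h * ∑ j ∈ (JN N).erase 0, f (h * j) - ∫ x in -(h * (N / 2))..h * (N / 2), f x| ≤
      2 * h * f 0 := by
  have hhalf (M : ℕ) (hM : 2 * M ≤ N) (hM' : N ≤ 2 * M + 2) :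
      |h * ∑ k ∈ range M, f (h * (k + 1)) - ∫ x in 0..h * (N / 2), f x| ≤ h * f 0 := by
    have hM₁ : (2 * M : ℝ) ≤ N := by exact_mod_cast hM
    have hM₂ : (N : ℝ) ≤ 2 * M + 2 := by exact_mod_cast hM'
    exact abs_mul_sum_sub_integral_le hf hf_nonneg hh
      (by gcongr; linarith) (by gcongr; linarith)
  have hsum : ∑ j ∈ (JN N).erase 0, f (h * j) =
      ∑ k ∈ range (N / 2), f (h * (k + 1)) +
        ∑ k ∈ range ((N - 1) / 2), f (h * (k + 1)) := by
    rw [sum_JN_erase_zero]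
    push_cast
    simp only [mul_neg, heven _]
  have hfi : IntervalIntegrable f volume 0 (h * (N / 2)) :=
    (hf.mono (by rw [Set.uIcc_of_le (by positivity)]; exact Set.Icc_subset_Ici_self)
      ).intervalIntegrable
  rw [hsum, heven.intervalIntegral_neg_eq_two_mul hfi]
  calc _ = |(h * ∑ k ∈ range (N / 2), f (h * (k + 1)) - ∫ x in 0..h * (N / 2), f x) +
        (h * ∑ k ∈ range ((N - 1) / 2), f (h * (k + 1)) - ∫ x in 0..h * (N / 2), f x)| := by
        congr 1; ring
    _ ≤ h * f 0 + h * f 0 :=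
      (abs_add_le _ _).trans
        (add_le_add (hhalf _ (by omega) (by omega)) (hhalf _ (by omega) (by omega)))
    _ = 2 * h * f 0 := by ring

end Riemann

lemma antitoneOn_exp_mul_sq {c : ℝ} (hc : c ≤ 0) :
    AntitoneOn (fun z => exp (c * z ^ 2)) (Ici 0) :=
  fun _ hx _ _ hxy => exp_le_exp.2 (mul_le_mul_of_nonpos_left (pow_le_pow_left₀ hx hxy 2) hc)

/-- The explicit Riemann-sum estimate (e:Rsum_bound2) from the Appendix:
for `N ≥ 2` and `t ≥ 1`,
`|(2π√t/(NT)) ∑_{j ∈ J_N, j ≠ 0} e^{-2d ξ_j² t} - ∫_{-π√t/T}^{π√t/T} e^{-2dz²} dz| ≤ 4π√t/(NT)`,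
where `ξ_j = 2πj/(NT)`. -/
theorem explicit_rescaled_riemann_bound (T d : ℝ) (hT : 0 < T) (hd : 0 < d) :
    ∀ N : ℕ, 2 ≤ N → ∀ t : ℝ, 1 ≤ t →
      |2 * π * Real.sqrt t / (N * T) *
            ∑ j ∈ (JN N).erase 0,
              Real.exp (-2 * d * (2 * π * (j : ℝ) / (N * T)) ^ 2 * t) -
          ∫ z in (-(π * Real.sqrt t / T))..(π * Real.sqrt t / T),
            Real.exp (-2 * d * z ^ 2)|
        ≤ 4 * π * Real.sqrt t / (N * T) := by
  intro N hN t ht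
  set h := 2 * π * √t / (N * T) with hh_def
  have hh : 0 < h := by positivity
  have hsummand (j : ℤ) :
      exp (-2 * d * (2 * π * j / (N * T)) ^ 2 * t) = exp (-2 * d * (h * j) ^ 2) := by
    simp only [hh_def, div_pow, mul_pow, Real.sq_sqrt (show 0 ≤ t by linarith)]
    ring_nf
  have hhalf : π * √t / T = h * (N / 2) := by
    rw [hh_def]; field_simp
  have hbound := abs_mul_sum_JN_sub_integral_le (fun x => by simp only [neg_sq])
    (antitoneOn_exp_mul_sq (by linarith : -2 * d ≤ 0)) (fun x _ => (exp_pos _).le) hh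
    (by omega : 1 ≤ N)
  simp only [ne_eq, OfNat.ofNat_ne_zero, not_false_eq_true, zero_pow, mul_zero, exp_zero,
    mul_one] at hbound
  simp only [hsummand, hhalf]
  calc _ ≤ 2 * h := hbound
    _ = 4 * π * √t / (N * T) := by rw [hh_def]; ring
end

section
/- Let T > 0 and d > 0. There exists a constant C > 0 such that for every integer N ≥ 2 and every t ≥ 1 one has | t^{3/2} · (2π/(NT)) · ∑_{j ∈ J_N} ξ_j² exp(−2d ξ_j² t) − ∫_{−π√t/T}^{π√t/T} z² exp(−2d z²) dz | ≤ C √t / N, where ξ_j = 2πj/(NT). -/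
/-!
With `s = √t` and `Δ = 2πs/(NT)`, the weighted sum is exactly the left-endpoint Riemann sum
`∑_{j ∈ J_N} Δ F(jΔ)` of `F(z) = z² e^{-2dz²}` on the grid `ΔJ_N`, which covers
`[-πs/T, πs/T]` up to one cell at each end. On each cell the rectangle error is at most
`Δ ∫_cell |F'|`, and the two boundary pieces cost at most `Δ sup |F|` each, so the total error is
`Δ (‖F'‖₁ + 2 sup |F|) = O(√t / N)` because `F'` is integrable and `F` is bounded.
-/

open Real Finset

open MeasureTheory intervalIntegral

section RiemannSum

variable {F F' : ℝ → ℝ}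

theorem abs_sub_le_integral_abs_deriv (hF : ∀ x, HasDerivAt F (F' x) x) {a b : ℝ} (hab : a ≤ b)
    (hF' : IntervalIntegrable F' volume a b) : |F b - F a| ≤ ∫ x in a..b, |F' x| := by
  rw [← integral_eq_sub_of_hasDerivAt (fun x _ => hF x) hF']
  exact abs_integral_le_integral_abs hab

theorem abs_left_rectangle_sub_integral_le (hF : ∀ x, HasDerivAt F (F' x) x) {a b : ℝ}
    (hab : a ≤ b) (hF' : IntervalIntegrable F' volume a b) :
    |(b - a) * F a - ∫ x in a..b, F x| ≤ (b - a) * ∫ x in a..b, |F' x| := by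
  have hFc : Continuous F := continuous_iff_continuousAt.2 fun x => (hF x).continuousAt
  have hosc : ∀ x ∈ Set.uIoc a b, ‖F x - F a‖ ≤ ∫ y in a..b, |F' y| := by
    intro x hx
    rw [Set.uIoc_of_le hab] at hx
    calc |F x - F a| ≤ ∫ y in a..x, |F' y| :=
          abs_sub_le_integral_abs_deriv hF hx.1.le
            (hF'.mono_set (Set.uIcc_subset_uIcc_left (Set.mem_uIcc_of_le hx.1.le hx.2)))
      _ ≤ ∫ y in a..b, |F' y| :=
          integral_mono_interval le_rfl hx.1.le hx.2 (.of_forall fun _ => abs_nonneg _) hF'.abs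
  have h := norm_integral_le_of_norm_le_const hosc
  rw [integral_sub (hFc.intervalIntegrable a b) intervalIntegrable_const,
    intervalIntegral.integral_const, smul_eq_mul, abs_of_nonneg (sub_nonneg.2 hab), Real.norm_eq_abs, abs_sub_comm] at h
  linarith

theorem sum_integral_adjacent_intervals_Ico_int {f : ℝ → ℝ} {g : ℤ → ℝ} {a : ℤ}
    (hf : ∀ u v, IntervalIntegrable f volume u v) {b : ℤ} (hab : a ≤ b) :
    ∑ j ∈ Ico a b, ∫ x in g j..g (j + 1), f x = ∫ x in g a..g b, f x := by
  induction b, hab using Int.leInduction with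
  | base => simp
  | succ b hab ih =>
    rw [← insert_Ico_right_eq_Ico_add_one hab, sum_insert right_notMem_Ico, ih, add_comm,
      integral_add_adjacent_intervals (hf _ _) (hf _ _)]

theorem abs_riemannSum_sub_integral_le (hF : ∀ x, HasDerivAt F (F' x) x)
    (hF' : ∀ u v, IntervalIntegrable F' volume u v) {Δ : ℝ} (hΔ : 0 ≤ Δ) {a b : ℤ} (hab : a ≤ b) :
    |∑ j ∈ Ico a b, Δ * F (j * Δ) - ∫ x in a * Δ..b * Δ, F x| ≤
      Δ * ∫ x in a * Δ..b * Δ, |F' x| := by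
  have hFc : Continuous F := continuous_iff_continuousAt.2 fun x => (hF x).continuousAt
  have hcell : ∀ j : ℤ, ((j + 1 : ℤ) : ℝ) * Δ - j * Δ = Δ := fun j => by push_cast; ring
  have hmono : ∀ j : ℤ, (j : ℝ) * Δ ≤ ((j + 1 : ℤ) : ℝ) * Δ := fun j => by linarith [hcell j]
  rw [← sum_integral_adjacent_intervals_Ico_int (g := fun j : ℤ => (j : ℝ) * Δ)
      (hFc.intervalIntegrable) hab,
    ← sum_integral_adjacent_intervals_Ico_int (g := fun j : ℤ => (j : ℝ) * Δ)
      (fun u v => (hF' u v).abs) hab, mul_sum, ← sum_sub_distrib]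
  refine (abs_sum_le_sum_abs _ _).trans (sum_le_sum fun j _ => ?_)
  simpa only [hcell] using abs_left_rectangle_sub_integral_le hF (hmono j) (hF' _ _)

theorem abs_ceil_mul_sub_mul_le (x : ℝ) {Δ : ℝ} (hΔ : 0 ≤ Δ) : |⌈x⌉ * Δ - x * Δ| ≤ Δ := by
  rw [← sub_mul, abs_mul, abs_of_nonneg hΔ, abs_of_nonneg (sub_nonneg.2 (Int.le_ceil x))]
  exact mul_le_of_le_one_left hΔ (by linarith [Int.ceil_lt_add_one x])

theorem abs_riemannSum_ceil_sub_integral_le {M : ℝ} (hF : ∀ x, HasDerivAt F (F' x) x)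
    (hF' : Integrable F') (hM : ∀ x, |F x| ≤ M) {Δ : ℝ} (hΔ : 0 ≤ Δ) {α β : ℝ} (hαβ : α ≤ β) :
    |∑ j ∈ Ico ⌈α⌉ ⌈β⌉, Δ * F (j * Δ) - ∫ x in α * Δ..β * Δ, F x| ≤
      Δ * ((∫ x, |F' x|) + 2 * M) := by
  have hFc : Continuous F := continuous_iff_continuousAt.2 fun x => (hF x).continuousAt
  have hFi : ∀ u v, IntervalIntegrable F volume u v := hFc.intervalIntegrable
  have hab : ⌈α⌉ ≤ ⌈β⌉ := Int.ceil_le_ceil hαβ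
  have hinner : |∑ j ∈ Ico ⌈α⌉ ⌈β⌉, Δ * F (j * Δ) - ∫ x in ⌈α⌉ * Δ..⌈β⌉ * Δ, F x| ≤
      Δ * ∫ x, |F' x| := by
    refine (abs_riemannSum_sub_integral_le hF (fun _ _ => hF'.intervalIntegrable) hΔ hab).trans ?_
    refine mul_le_mul_of_nonneg_left ?_ hΔ
    rw [integral_of_le (mul_le_mul_of_nonneg_right (Int.cast_le.2 hab) hΔ)]
    exact setIntegral_le_integral hF'.abs (.of_forall fun _ => abs_nonneg _)
  have hedge : ∀ x : ℝ, |∫ y in ⌈x⌉ * Δ..x * Δ, F y| ≤ M * Δ := fun x => by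
    have hM0 : 0 ≤ M := (abs_nonneg _).trans (hM 0)
    refine (norm_integral_le_of_norm_le_const (f := F) fun y _ => hM y).trans ?_
    rw [abs_sub_comm]
    exact mul_le_mul_of_nonneg_left (abs_ceil_mul_sub_mul_le x hΔ) hM0
  have hsplit := integral_interval_sub_interval_comm (hFi (⌈α⌉ * Δ) (⌈β⌉ * Δ))
    (hFi (α * Δ) (β * Δ)) (hFi (⌈α⌉ * Δ) (α * Δ))
  calc _ = |(∑ j ∈ Ico ⌈α⌉ ⌈β⌉, Δ * F (j * Δ) - ∫ x in ⌈α⌉ * Δ..⌈β⌉ * Δ, F x) +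
          ((∫ x in ⌈α⌉ * Δ..α * Δ, F x) - ∫ x in ⌈β⌉ * Δ..β * Δ, F x)| := by
        rw [← hsplit, sub_add_sub_cancel]
    _ ≤ (Δ * ∫ x, |F' x|) + (M * Δ + M * Δ) :=
        (abs_add_le _ _).trans (add_le_add hinner ((abs_sub _ _).trans (add_le_add
          (hedge α) (hedge β))))
    _ = Δ * ((∫ x, |F' x|) + 2 * M) := by ring

end RiemannSum

section GaussianMoment

theorem hasDerivAt_sq_mul_exp_mul_sq (a x : ℝ) :
    HasDerivAt (fun z => z ^ 2 * exp (a * z ^ 2))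
      ((2 * x + 2 * a * x ^ 3) * exp (a * x ^ 2)) x := by
  have h := (hasDerivAt_pow 2 x).fun_mul ((hasDerivAt_pow 2 x).const_mul a).exp
  refine h.congr_deriv ?_
  norm_num
  ring

variable {a : ℝ}

theorem integrable_pow_mul_exp_mul_sq (ha : a < 0) (n : ℕ) :
    Integrable fun x : ℝ => x ^ n * exp (a * x ^ 2) := by
  have h := integrable_rpow_mul_exp_neg_mul_sq (neg_pos.2 ha) (s := n)
    (neg_one_lt_zero.trans_le n.cast_nonneg)
  simpa only [neg_neg, Real.rpow_natCast] using h

theorem integrable_deriv_sq_mul_exp_mul_sq (ha : a < 0) :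
    Integrable fun x : ℝ => (2 * x + 2 * a * x ^ 3) * exp (a * x ^ 2) := by
  have h := ((integrable_pow_mul_exp_mul_sq ha 1).const_mul 2).add
    ((integrable_pow_mul_exp_mul_sq ha 3).const_mul (2 * a))
  refine h.congr (.of_forall fun x => ?_)
  simp only [Pi.add_apply]
  ring

theorem sq_mul_exp_mul_sq_le (ha : a < 0) (x : ℝ) : x ^ 2 * exp (a * x ^ 2) ≤ exp (-1) / -a := by
  rw [le_div_iff₀ (neg_pos.2 ha)]
  have h := mul_exp_neg_le_exp_neg_one (-a * x ^ 2)
  rw [neg_mul, neg_neg] at h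
  linear_combination h

end GaussianMoment

theorem weighted_sum_eq_riemannSum (T d : ℝ) (N : ℕ) {t : ℝ} (ht : 0 ≤ t) :
    t ^ (3 / 2 : ℝ) * (2 * π / (N * T)) * ∑ j ∈ JN N, (2 * π * (j : ℝ) / (N * T)) ^ 2 *
        exp (-2 * d * (2 * π * (j : ℝ) / (N * T)) ^ 2 * t) =
      ∑ j ∈ JN N, 2 * π * √t / (N * T) *
        ((j * (2 * π * √t / (N * T))) ^ 2 * exp (-2 * d * (j * (2 * π * √t / (N * T))) ^ 2)) := by
  have ht32 : t ^ (3 / 2 : ℝ) = t * √t := by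
    rw [show (3 / 2 : ℝ) = 1 + 1 / 2 by norm_num, rpow_add' ht (by norm_num), rpow_one,
      ← sqrt_eq_rpow]
  rw [mul_sum]
  refine sum_congr rfl fun j _ => ?_
  have hξ : ((j : ℝ) * (2 * π * √t / (N * T))) ^ 2 = (2 * π * j / (N * T)) ^ 2 * t := by
    simp only [mul_pow, div_pow, sq_sqrt ht]
    ring
  rw [hξ, ← mul_assoc (-2 * d), ht32]
  ring

/-- The key Riemann-sum estimate (e:Rsum_bound) from the Appendix: for `N ≥ 2`, `t ≥ 1`,
`|t^{3/2} (2π/(NT)) ∑_{j ∈ J_N} ξ_j² e^{-2d ξ_j² t} - ∫_{-π√t/T}^{π√t/T} z² e^{-2dz²} dz|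
  ≤ C √t / N`, where `ξ_j = 2πj/(NT)` and `C` is independent of `N` and `t`. -/
theorem rescaled_riemann_bound_weighted (T d : ℝ) (hT : 0 < T) (hd : 0 < d) :
    ∃ C : ℝ, 0 < C ∧ ∀ N : ℕ, 2 ≤ N → ∀ t : ℝ, 1 ≤ t →
      |t ^ (3 / 2 : ℝ) * (2 * π / (N * T)) *
            ∑ j ∈ JN N,
              (2 * π * (j : ℝ) / (N * T)) ^ 2 *
                Real.exp (-2 * d * (2 * π * (j : ℝ) / (N * T)) ^ 2 * t) -
          ∫ z in (-(π * Real.sqrt t / T))..(π * Real.sqrt t / T),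
            z ^ 2 * Real.exp (-2 * d * z ^ 2)|
        ≤ C * Real.sqrt t / N := by
  have ha : -2 * d < 0 := by linarith
  set I := ∫ z, |(2 * z + 2 * (-2 * d) * z ^ 3) * exp (-2 * d * z ^ 2)|
  have hM : ∀ z : ℝ, |z ^ 2 * exp (-2 * d * z ^ 2)| ≤ exp (-1) / (2 * d) := fun z => by
    rw [abs_of_nonneg (by positivity)]
    simpa only [neg_mul, neg_neg] using sq_mul_exp_mul_sq_le ha z
  refine ⟨2 * π / T * (I + 2 * (exp (-1) / (2 * d))), by positivity, fun N hN t ht => ?_⟩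
  have hN0 : (0 : ℝ) < N := by positivity
  set s := √t
  set Δ := 2 * π * s / (N * T) with hΔ
  have hsum := weighted_sum_eq_riemannSum T d N (by linarith : 0 ≤ t)
  have hlo : -(N : ℝ) / 2 * Δ = -(π * s / T) := by rw [hΔ]; field_simp
  have hhi : (N : ℝ) / 2 * Δ = π * s / T := by rw [hΔ]; field_simp
  have key := abs_riemannSum_ceil_sub_integral_le (hasDerivAt_sq_mul_exp_mul_sq (-2 * d))
    (integrable_deriv_sq_mul_exp_mul_sq ha) hM (by positivity : 0 ≤ Δ)
    (by linarith : -(N : ℝ) / 2 ≤ N / 2)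
  rw [hlo, hhi] at key
  rw [hsum, JN]
  refine key.trans_eq ?_
  rw [hΔ]
  ring
end

section
/- Let T > 0 and N ≥ 1 an integer. Let f : ℝ → ℂ be a continuous T-periodic function with absolutely summable T-Fourier coefficients (f̂_T(2πk/T))_{k∈ℤ}, where f̂_T(2πk/T) = ∫_0^T e^{−2πiky/T} f(y) dy, and let g : ℝ → ℂ be a continuous NT-periodic function with absolutely summable NT-Fourier coefficients. Then for every ξ ∈ Ω_N and every x ∈ ℝ, B_T(fg)(ξ,x) = f(x) · B_T(g)(ξ,x). -/
open Real Finset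

/-- Fourier transform on the torus of period `P`: `ĥ(ζ) = ∫_0^P e^{-iζy} h(y) dy`. -/
noncomputable def fhat (P : ℝ) (h : ℝ → ℂ) (ζ : ℝ) : ℂ :=
  ∫ y in (0:ℝ)..P, Complex.exp (-(Complex.I * (ζ : ℂ) * (y : ℂ))) * h y

/-- The `T`-periodic Bloch transform of a `P`-periodic function `g`:
`B_T(g)(ξ,x) = ∑_{ℓ ∈ ℤ} e^{2πiℓx/T} ĝ(ξ + 2πℓ/T)`. -/
noncomputable def blochT (T P : ℝ) (g : ℝ → ℂ) (ξ x : ℝ) : ℂ :=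
  ∑' ℓ : ℤ, Complex.exp (2 * (Real.pi : ℂ) * Complex.I * (ℓ : ℂ) * (x : ℂ) / (T : ℂ)) *
    fhat P g (ξ + 2 * Real.pi * (ℓ : ℝ) / T)

/-! Expanding `f` in its absolutely convergent Fourier series and integrating term by term
against `g` gives `(fg)^(ζ) = T⁻¹ ∑ₖ f̂(2πk/T) ĝ(ζ - 2πk/T)`. Since
`e^{2πiℓx/T} = e^{2πikx/T} e^{2πi(ℓ-k)x/T}`, the Bloch series of `fg` at `(ξ, x)` is then the
convolution of the absolutely summable sequences `T⁻¹ f̂(2πk/T) e^{2πikx/T}` and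
`e^{2πimx/T} ĝ(ξ + 2πm/T)`, so it sums to the product `f(x) · B_T(g)(ξ,x)` of their sums.
For `ξ = 2πj/(NT)` the second sequence runs over the `NT`-Fourier coefficients of `g` of index
`j + Nm`, which gives its summability. -/

open MeasureTheory

section ConvolutionSum

variable {G R : Type*} [AddCommGroup G] [NormedRing R] [CompleteSpace R]

theorem tsum_mul_tsum_eq_tsum_tsum_sub {a b : G → R} (ha : Summable fun k => ‖a k‖)
    (hb : Summable fun m => ‖b m‖) :
    (∑' k, a k) * (∑' m, b m) = ∑' ℓ, ∑' k, a k * b (ℓ - k) := by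
  let shear : G × G ≃ G × G :=
    { toFun := fun p => (p.2, p.1 - p.2)
      invFun := fun q => (q.1 + q.2, q.1)
      left_inv := fun p => by simp
      right_inv := fun q => by simp }
  have hconv : Summable fun p : G × G => a p.2 * b (p.1 - p.2) :=
    shear.summable_iff.mpr (summable_mul_of_summable_norm ha hb)
  rw [tsum_mul_tsum_of_summable_norm ha hb, ← hconv.tsum_prod' hconv.prod_factor,
    ← shear.tsum_eq]
  rfl

end ConvolutionSum

theorem norm_exp_two_pi_I_mul_div (ℓ : ℤ) (x T : ℝ) :
    ‖Complex.exp (2 * π * Complex.I * ℓ * x / T)‖ = 1 := by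
  rw [show 2 * π * Complex.I * ℓ * x / T = ((2 * π * ℓ * x / T : ℝ) : ℂ) * Complex.I by
    push_cast; ring, Complex.norm_exp_ofReal_mul_I]

theorem norm_exp_neg_I_mul (ζ y : ℝ) : ‖Complex.exp (-(Complex.I * ζ * y))‖ = 1 := by
  simp [Complex.norm_exp]

section FourierSeries

variable {T : ℝ} {f : ℝ → ℂ}

theorem fourierCoeff_periodic_lift [Fact (0 < T)] (hfp : Function.Periodic f T) (k : ℤ) :
    fourierCoeff (hfp.lift : AddCircle T → ℂ) k = 1 / (T : ℂ) * fhat T f (2 * π * k / T) := by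
  have hphase : ∀ y : ℝ, (fourier (-k) (y : AddCircle T) : ℂ) =
      Complex.exp (-(Complex.I * ((2 * π * k / T : ℝ) : ℂ) * y)) := by
    intro y
    rw [fourier_coe_apply]
    congr 1
    push_cast
    ring
  rw [fourierCoeff_eq_intervalIntegral _ k 0, zero_add, fhat]
  simp only [hphase, Function.Periodic.lift_coe, smul_eq_mul, Complex.real_smul, one_div,
    Complex.ofReal_inv]

theorem hasSum_fhat_mul_exp (hT : 0 < T) (hfc : Continuous f) (hfp : Function.Periodic f T)
    (hfs : Summable fun k : ℤ => ‖fhat T f (2 * π * k / T)‖) (x : ℝ) :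
    HasSum (fun k : ℤ => 1 / (T : ℂ) * fhat T f (2 * π * k / T) *
      Complex.exp (2 * π * Complex.I * k * x / T)) (f x) := by
  have : Fact (0 < T) := ⟨hT⟩
  let F : C(AddCircle T, ℂ) := ⟨hfp.lift, hfc.quotient_liftOn' _⟩
  have hcoeff : fourierCoeff F = fun k : ℤ => 1 / (T : ℂ) * fhat T f (2 * π * k / T) :=
    funext (fourierCoeff_periodic_lift hfp)
  have hsum : Summable (fourierCoeff F) := hcoeff ▸ (hfs.of_norm.mul_left _)
  have h := has_pointwise_sum_fourier_series_of_summable hsum (x : AddCircle T)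
  simp only [hcoeff, smul_eq_mul, fourier_coe_apply] at h
  exact h

theorem fhat_mul_eq_tsum (hT : 0 < T) (hfc : Continuous f)
    (hfp : Function.Periodic f T) (hfs : Summable fun k : ℤ => ‖fhat T f (2 * π * k / T)‖)
    {P : ℝ} {g : ℝ → ℂ} (hg : IntervalIntegrable g volume 0 P) (ζ : ℝ) :
    fhat P (fun y => f y * g y) ζ =
      ∑' k : ℤ, 1 / (T : ℂ) * fhat T f (2 * π * k / T) * fhat P g (ζ - 2 * π * k / T) := by
  set c : ℤ → ℂ := fun k => 1 / (T : ℂ) * fhat T f (2 * π * k / T)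
  have hc : Summable fun k => ‖c k‖ := by
    simpa only [c, norm_mul] using hfs.mul_left ‖1 / (T : ℂ)‖
  have hphase : ∀ (k : ℤ) (y : ℝ), Complex.exp (2 * π * Complex.I * k * y / T) *
      Complex.exp (-(Complex.I * ζ * y)) =
        Complex.exp (-(Complex.I * ((ζ - 2 * π * k / T : ℝ) : ℂ) * y)) := by
    intro k y
    rw [← Complex.exp_add]
    congr 1
    push_cast
    ring
  have hsum : HasSum
      (fun k => ∫ y in (0 : ℝ)..P,
        c k * (Complex.exp (-(Complex.I * ((ζ - 2 * π * k / T : ℝ) : ℂ) * y)) * g y))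
      (∫ y in (0 : ℝ)..P, Complex.exp (-(Complex.I * ζ * y)) * (f y * g y)) := by
    refine intervalIntegral.hasSum_integral_of_dominated_convergence (fun k y => ‖c k‖ * ‖g y‖)
      (fun k => ?_) (fun k => ae_of_all _ fun y _ => ?_) (ae_of_all _ fun y _ => hc.mul_right _)
      ?_ (ae_of_all _ fun y _ => ?_)
    · exact ((Continuous.aestronglyMeasurable (by fun_prop)).mul
        hg.def'.aestronglyMeasurable).const_mul (c k)
    · simp only [c, norm_mul, norm_exp_neg_I_mul, one_mul, le_refl]
    · simp_rw [tsum_mul_right]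
      exact hg.norm.const_mul _
    · rw [mul_left_comm]
      refine ((hasSum_fhat_mul_exp hT hfc hfp hfs y).mul_right
        (Complex.exp (-(Complex.I * ζ * y)) * g y)).congr_fun fun k => ?_
      rw [← hphase]
      ring
  rw [fhat, ← hsum.tsum_eq]
  simp only [intervalIntegral.integral_const_mul, fhat, c]

theorem blochT_mul_of_summable (hT : 0 < T) (hfc : Continuous f)
    (hfp : Function.Periodic f T) (hfs : Summable fun k : ℤ => ‖fhat T f (2 * π * k / T)‖)
    {P : ℝ} {g : ℝ → ℂ} (hg : IntervalIntegrable g volume 0 P) {ξ : ℝ}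
    (hgs : Summable fun m : ℤ => ‖fhat P g (ξ + 2 * π * m / T)‖) (x : ℝ) :
    blochT T P (fun y => f y * g y) ξ x = f x * blochT T P g ξ x := by
  set e : ℤ → ℂ := fun ℓ => Complex.exp (2 * π * Complex.I * ℓ * x / T)
  set a : ℤ → ℂ := fun k => 1 / (T : ℂ) * fhat T f (2 * π * k / T) * e k
  set b : ℤ → ℂ := fun m => e m * fhat P g (ξ + 2 * π * m / T)
  have ha : Summable fun k => ‖a k‖ := by
    simpa only [a, e, norm_mul, norm_exp_two_pi_I_mul_div, mul_one] using
      hfs.mul_left ‖1 / (T : ℂ)‖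
  have hb : Summable fun m => ‖b m‖ := by
    simpa only [b, e, norm_mul, norm_exp_two_pi_I_mul_div, one_mul] using hgs
  have hterm : ∀ ℓ k : ℤ, e ℓ * (1 / (T : ℂ) * fhat T f (2 * π * k / T) *
      fhat P g (ξ + 2 * π * ℓ / T - 2 * π * k / T)) = a k * b (ℓ - k) := by
    intro ℓ k
    have he : e ℓ = e k * e (ℓ - k) := by
      simp only [e, ← Complex.exp_add]
      congr 1
      push_cast
      ring
    have hfreq : ξ + 2 * π * ℓ / T - 2 * π * k / T = ξ + 2 * π * ((ℓ - k : ℤ) : ℝ) / T := by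
      push_cast
      ring
    rw [he, hfreq]
    ring
  calc blochT T P (fun y => f y * g y) ξ x = ∑' ℓ, ∑' k, a k * b (ℓ - k) := by
        refine tsum_congr fun ℓ => ?_
        rw [fhat_mul_eq_tsum hT hfc hfp hfs hg, ← tsum_mul_left]
        exact tsum_congr (hterm ℓ)
    _ = (∑' k, a k) * ∑' m, b m := (tsum_mul_tsum_eq_tsum_tsum_sub ha hb).symm
    _ = f x * blochT T P g ξ x := by
        rw [(hasSum_fhat_mul_exp hT hfc hfp hfs x).tsum_eq]
        rfl

end FourierSeries

theorem bloch_mul_general (T : ℝ) (hT : 0 < T) (N : ℕ) (hN : 1 ≤ N) (f g : ℝ → ℂ)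
    (hfc : Continuous f) (hgc : Continuous g)
    (hfp : Function.Periodic f T)
    (hfs : Summable fun k : ℤ => ‖fhat T f (2 * π * (k : ℝ) / T)‖)
    (hgs : Summable fun k : ℤ => ‖fhat (N * T) g (2 * π * (k : ℝ) / (N * T))‖) :
    ∀ j ∈ JN N, ∀ x : ℝ,
      blochT T (N * T) (fun y => f y * g y) (2 * π * (j : ℝ) / (N * T)) x =
        f x * blochT T (N * T) g (2 * π * (j : ℝ) / (N * T)) x := by
  intro j _ x
  have hN0 : (N : ℝ) ≠ 0 := by positivity
  have hfreq : ∀ m : ℤ, 2 * π * (j : ℝ) / (N * T) + 2 * π * m / T =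
      2 * π * ((j + N * m : ℤ) : ℝ) / (N * T) := by
    intro m
    push_cast
    field_simp
  have hinj : Function.Injective fun m : ℤ => j + N * m := by
    intro m m' h
    exact mul_left_cancel₀ (by omega : (N : ℤ) ≠ 0) (add_left_cancel h)
  refine blochT_mul_of_summable hT hfc hfp hfs (hgc.intervalIntegrable _ _) ?_ x
  simp_rw [hfreq]
  exact hgs.comp_injective hinj

/-- First identity of Lemma 2.1: for `f` a `T`-periodic function and `g` an `NT`-periodic
function, `B_T(fg)(ξ,x) = f(x) B_T(g)(ξ,x)` for every Bloch frequency `ξ ∈ Ω_N`. -/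
theorem bloch_mul (T : ℝ) (hT : 0 < T) (N : ℕ) (hN : 1 ≤ N) (f g : ℝ → ℂ)
    (hfc : Continuous f) (hgc : Continuous g)
    (hfp : Function.Periodic f T) (hgp : Function.Periodic g (N * T))
    (hfs : Summable fun k : ℤ => ‖fhat T f (2 * π * (k : ℝ) / T)‖)
    (hgs : Summable fun k : ℤ => ‖fhat (N * T) g (2 * π * (k : ℝ) / (N * T))‖) :
    ∀ j ∈ JN N, ∀ x : ℝ,
      blochT T (N * T) (fun y => f y * g y) (2 * π * (j : ℝ) / (N * T)) x =
        f x * blochT T (N * T) g (2 * π * (j : ℝ) / (N * T)) x :=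
  bloch_mul_general T hT N hN f g hfc hgc hfp hfs hgs
end

section
/- Let T > 0, d > 0, and let N ≥ 1 be an integer. Define F_N : (0,∞) → ℝ by F_N(t) = t^{3/2} · (2π/(NT)) · ∑_{j ∈ J_N} ξ_j² exp(−2d ξ_j² t), where ξ_j = 2πj/(NT). Then F_N is differentiable on (0,∞) and for every t > 0, F_N′(t) ≤ t^{−1} · (3/2 − 8dπ²t/(N²T²)) · F_N(t). -/
open Real Finset

/-- `F_N(t) = t^{3/2} (2π/(NT)) ∑_{j ∈ J_N} ξ_j² e^{-2d ξ_j² t}` with `ξ_j = 2πj/(NT)`. -/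
noncomputable def FN (T d : ℝ) (N : ℕ) (t : ℝ) : ℝ :=
  t ^ (3 / 2 : ℝ) * (2 * Real.pi / (N * T)) *
    ∑ j ∈ JN N,
      (2 * Real.pi * (j : ℝ) / (N * T)) ^ 2 *
        Real.exp (-2 * d * (2 * Real.pi * (j : ℝ) / (N * T)) ^ 2 * t)

/-!
Writing `a_j = ξ_j²` and `g(t) = ∑ a_j e^{-2d a_j t}`, we have `g' = -2d ∑ a_j² e^{-2d a_j t}`.
Every `a_j` is either `0` or at least the spectral gap `ρ² = (2π/(NT))²`, so `a_j² ≥ ρ² a_j`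
termwise and `g' ≤ -2dρ² g`. Since `F_N = t^{3/2} ρ g` with `ρ ≥ 0`, the product rule turns this
into `F_N' ≤ t⁻¹ (3/2 - 2dρ² t) F_N`, and `2dρ² = 8dπ²/(N²T²)`.
-/

section ExpSum

variable {ι : Type*}

noncomputable def expSum (s : Finset ι) (a : ι → ℝ) (c t : ℝ) : ℝ :=
  ∑ i ∈ s, a i * exp (c * a i * t)

theorem hasDerivAt_expSum (s : Finset ι) (a : ι → ℝ) (c t : ℝ) :
    HasDerivAt (expSum s a c) (c * ∑ i ∈ s, a i ^ 2 * exp (c * a i * t)) t := by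
  have hterm : ∀ i ∈ s, HasDerivAt (fun u => a i * exp (c * a i * u))
      (c * (a i ^ 2 * exp (c * a i * t))) t := fun i _ =>
    ((((hasDerivAt_id' t).const_mul (c * a i)).exp).const_mul (a i)).congr_deriv (by ring)
  rw [mul_sum]
  exact HasDerivAt.fun_sum hterm

theorem mul_sum_le_sum_sq_mul {s : Finset ι} {a w : ι → ℝ} {m : ℝ} (hm : 0 ≤ m)
    (hw : ∀ i ∈ s, 0 ≤ w i) (hgap : ∀ i ∈ s, a i = 0 ∨ m ≤ a i) :
    m * ∑ i ∈ s, a i * w i ≤ ∑ i ∈ s, a i ^ 2 * w i := by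
  rw [mul_sum]
  refine sum_le_sum fun i hi => ?_
  rcases hgap i hi with h0 | hmi
  · simp [h0]
  · have hsq : m * a i ≤ a i ^ 2 := by nlinarith
    nlinarith [hw i hi]

theorem expSum_deriv_le {s : Finset ι} {a : ι → ℝ} {c m : ℝ} (hc : c ≤ 0) (hm : 0 ≤ m)
    (hgap : ∀ i ∈ s, a i = 0 ∨ m ≤ a i) (t : ℝ) :
    c * ∑ i ∈ s, a i ^ 2 * exp (c * a i * t) ≤ c * m * expSum s a c t := by
  rw [mul_assoc]
  exact mul_le_mul_of_nonpos_left
    (mul_sum_le_sum_sq_mul hm (fun i _ => (exp_pos _).le) hgap) hc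

end ExpSum

theorem differentiableAt_rpow_mul_and_deriv_le {g : ℝ → ℝ} {g' p C κ t : ℝ} (ht : 0 < t) (hC : 0 ≤ C)
    (hg : HasDerivAt g g' t) (hg' : g' ≤ -κ * g t) :
    DifferentiableAt ℝ (fun u => u ^ p * C * g u) t ∧
      deriv (fun u => u ^ p * C * g u) t ≤ t⁻¹ * (p - κ * t) * (t ^ p * C * g t) := by
  have hF : HasDerivAt (fun u => u ^ p * C * g u) (p * t ^ (p - 1) * C * g t + t ^ p * C * g') t :=
    ((hasDerivAt_rpow_const (Or.inl ht.ne')).mul_const C).mul hg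
  refine ⟨hF.differentiableAt, ?_⟩
  have hpow : t ^ (p - 1) = t ^ p * t⁻¹ := rpow_sub_one ht.ne' p
  have hscale : 0 ≤ t ^ p * C := mul_nonneg (rpow_nonneg ht.le p) hC
  rw [hF.deriv, hpow]
  calc p * (t ^ p * t⁻¹) * C * g t + t ^ p * C * g'
      ≤ p * (t ^ p * t⁻¹) * C * g t + t ^ p * C * (-κ * g t) := by gcongr
    _ = t⁻¹ * (p - κ * t) * (t ^ p * C * g t) := by field_simp; ring

theorem int_mul_sq_eq_zero_or_le (j : ℤ) (ρ : ℝ) : (j * ρ) ^ 2 = 0 ∨ ρ ^ 2 ≤ (j * ρ) ^ 2 := by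
  rcases eq_or_ne j 0 with rfl | hj
  · simp
  · have hj2 : (1 : ℝ) ≤ (j : ℝ) ^ 2 := by
      exact_mod_cast Int.one_le_abs hj |>.trans (Int.le_self_sq _) |>.trans_eq (sq_abs j)
    exact Or.inr (by rw [mul_pow]; exact le_mul_of_one_le_left (sq_nonneg ρ) hj2)

theorem FN_differential_inequality_general (T d : ℝ) (hT : 0 < T) (hd : 0 < d)
    (N : ℕ) :
    ∀ t : ℝ, 0 < t →
      DifferentiableAt ℝ (FN T d N) t ∧
        deriv (FN T d N) t ≤
          t⁻¹ * (3 / 2 - 8 * d * π ^ 2 * t / (N ^ 2 * T ^ 2)) * FN T d N t := by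
  intro t ht
  set ρ := 2 * π / (N * T)
  set a : ℤ → ℝ := fun j => (2 * π * j / (N * T)) ^ 2
  have hρ : 0 ≤ ρ := div_nonneg (by positivity) (mul_nonneg N.cast_nonneg hT.le)
  have hgap : ∀ j ∈ JN N, a j = 0 ∨ ρ ^ 2 ≤ a j := fun j _ => by
    have hξ : 2 * π * j / (N * T) = j * ρ := by ring
    simpa only [a, hξ] using int_mul_sq_eq_zero_or_le j ρ
  have hg' := expSum_deriv_le (by linarith : -2 * d ≤ 0) (sq_nonneg ρ) hgap t
  have hκ : 8 * d * π ^ 2 * t / (N ^ 2 * T ^ 2) = -(-2 * d * ρ ^ 2) * t := by ring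
  rw [hκ]
  exact differentiableAt_rpow_mul_and_deriv_le ht hρ (hasDerivAt_expSum _ _ _ t) (by rwa [neg_neg])

/-- The differential inequality for `F_N` from the end of the Appendix:
`F_N` is differentiable on `(0,∞)` and
`F_N'(t) ≤ t⁻¹ (3/2 - 8dπ²t/(N²T²)) F_N(t)` for all `t > 0`. -/
theorem FN_differential_inequality (T d : ℝ) (hT : 0 < T) (hd : 0 < d)
    (N : ℕ) (hN : 1 ≤ N) :
    ∀ t : ℝ, 0 < t →
      DifferentiableAt ℝ (FN T d N) t ∧
        deriv (FN T d N) t ≤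
          t⁻¹ * (3 / 2 - 8 * d * π ^ 2 * t / (N ^ 2 * T ^ 2)) * FN T d N t :=
  FN_differential_inequality_general T d hT hd N
end
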